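/- Two ordered rooted binary trees with n internal nodes are equal if and only if they have the same multiset of induced leaf partitions from internal edges, i.e., e = n - 1 common edge pairs. -/

import Mathlib

inductive BT : Type
  | leaf : BT
  | node : BT → BT → BT
deriving DecidableEq

namespace BT

/-- number of internal nodes -/
def size : BT → ℕ
  | leaf => 0
  | node l r => size l + size r + 1

/-- number of leaves -/
def nl (t : BT) : ℕ := size t + 1

/-- one (right) rotation somewhere in the tree -/
inductive Rot : BT → BT → Prop
  | root (a b c : BT) : Rot (node (node a b) c) (node a (node b c))
  | congrL {l l' : BT} (r : BT) : Rot l l' → Rot (node l r) (node l' r)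
  | congrR (l : BT) {r r' : BT} : Rot r r' → Rot (node l r) (node l r')

/-- a rotation move: a right rotation or its inverse (a left rotation) -/
def Move (s t : BT) : Prop := Rot s t ∨ Rot t s

/-- `Chain n s t`: `s` is transformed into `t` by `n` rotation moves -/
inductive Chain : ℕ → BT → BT → Prop
  | refl (t : BT) : Chain 0 t t
  | step {n : ℕ} {s u t : BT} : Move s u → Chain n u t → Chain (n + 1) s t

/-- rotation distance -/
noncomputable def dR (s t : BT) : ℕ := sInf {n | Chain n s t}

def isNode : BT → Bool
  | leaf => false
  | node _ _ => true

/-- the multiset of leaf partitions induced by internal edges, where the leaves of the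
tree are numbered from `k` on, left to right; each internal edge is recorded by the
set of leaf numbers below it. -/
def iparts : BT → ℕ → Multiset (Finset ℕ)
  | leaf, _ => 0
  | node l r, k =>
      ((if isNode l then {Finset.Ico k (k + nl l)} else 0) + iparts l k)
        + ((if isNode r then {Finset.Ico (k + nl l) (k + nl l + nl r)} else 0)
            + iparts r (k + nl l))

/-- number of common edge pairs -/
def commonEdges (s t : BT) : ℕ := ((iparts s 0) ∩ (iparts t 0)).card

/-!
Number the leaves from `k`. Every set recorded by `iparts (node l r) k` comes from the left or the
right subtree of the root: the former lie in the leaf interval `[k, k + nl l)` of `l`, the latter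
are nonempty and disjoint from it, so the multiset splits into the contributions of the two
subtrees. The interval of `l` itself is recorded unless `l` is a leaf, and it is the largest
recorded set containing `k`; hence `nl l` can be read off, and induction shows that a tree of known
size is determined by its partitions. Both multisets have `n - 1` elements, so their intersection
has `n - 1` elements exactly when they coincide.
-/

lemma _root_.Multiset.card_inter_eq_iff {α : Type*} [DecidableEq α] {s t : Multiset α} {m : ℕ}
    (hs : s.card = m) (ht : t.card = m) : (s ∩ t).card = m ↔ s = t := by
  refine ⟨fun h => ?_, by rintro rfl; rw [← Multiset.inf_eq_inter, inf_idem, hs]⟩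
  have hs' : s ∩ t = s := Multiset.eq_of_le_of_card_le Multiset.inter_le_left (by omega)
  have ht' : s ∩ t = t := Multiset.eq_of_le_of_card_le Multiset.inter_le_right (by omega)
  exact hs'.symm.trans ht'

/-- The leaf sets below all internal nodes of `t`, the root included. -/
def clades (t : BT) (k : ℕ) : Multiset (Finset ℕ) :=
  (if isNode t then {Finset.Ico k (k + nl t)} else 0) + iparts t k

lemma iparts_node (l r : BT) (k : ℕ) :
    iparts (node l r) k = clades l k + clades r (k + nl l) := rfl

lemma clades_leaf (k : ℕ) : clades leaf k = 0 := rfl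

lemma clades_node (l r : BT) (k : ℕ) :
    clades (node l r) k = Finset.Ico k (k + nl (node l r)) ::ₘ iparts (node l r) k := rfl

lemma nl_node (l r : BT) : nl (node l r) = nl l + nl r := by
  simp only [nl, size]; omega

lemma nl_pos (t : BT) : 0 < nl t := Nat.succ_pos _

lemma isNode_eq_of_size_eq {s t : BT} (h : s.size = t.size) : isNode s = isNode t := by
  cases s <;> cases t <;> simp_all [size, isNode]

lemma card_clades (t : BT) (k : ℕ) : (clades t k).card = t.size := by
  induction t generalizing k with
  | leaf => rfl
  | node l r ihl ihr =>
    rw [clades_node, Multiset.card_cons, iparts_node, Multiset.card_add, ihl, ihr, size]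

lemma card_iparts (t : BT) (k : ℕ) : (iparts t k).card = t.size - 1 := by
  cases t with
  | leaf => rfl
  | node l r =>
    have := card_clades (node l r) k
    rw [clades_node, Multiset.card_cons] at this
    omega

lemma nonempty_and_subset_of_mem_clades {t : BT} {k : ℕ} {A : Finset ℕ}
    (hA : A ∈ clades t k) : A.Nonempty ∧ A ⊆ Finset.Ico k (k + nl t) := by
  induction t generalizing k with
  | leaf => simp [clades_leaf] at hA
  | node l r ihl ihr =>
    rw [clades_node, Multiset.mem_cons, iparts_node, Multiset.mem_add] at hA
    rw [nl_node] at hA ⊢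
    rcases hA with rfl | hA | hA
    · exact ⟨Finset.nonempty_Ico.mpr (by have := nl_pos l; omega), subset_rfl⟩
    · exact (ihl hA).imp_right fun h => h.trans (Finset.Ico_subset_Ico le_rfl (by omega))
    · exact (ihr hA).imp_right fun h => h.trans (Finset.Ico_subset_Ico (by omega) (by omega))

lemma subset_of_mem_clades {t : BT} {k : ℕ} {A : Finset ℕ} (hA : A ∈ clades t k) :
    A ⊆ Finset.Ico k (k + nl t) :=
  (nonempty_and_subset_of_mem_clades hA).2

lemma not_subset_of_mem_clades {t : BT} {k m : ℕ} {A : Finset ℕ} (hA : A ∈ clades t (k + m)) :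
    ¬ A ⊆ Finset.Ico k (k + m) := by
  obtain ⟨⟨a, ha⟩, hsub⟩ := nonempty_and_subset_of_mem_clades hA
  intro h
  have h₁ := Finset.mem_Ico.mp (h ha)
  have h₂ := Finset.mem_Ico.mp (hsub ha)
  omega

lemma filter_subset_iparts_node (l r : BT) (k : ℕ) :
    (iparts (node l r) k).filter (· ⊆ Finset.Ico k (k + nl l)) = clades l k := by
  rw [iparts_node, Multiset.filter_add, Multiset.filter_eq_self.mpr fun _ => subset_of_mem_clades,
    Multiset.filter_eq_nil.mpr fun _ => not_subset_of_mem_clades, add_zero]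

lemma filter_not_subset_iparts_node (l r : BT) (k : ℕ) :
    (iparts (node l r) k).filter (¬ · ⊆ Finset.Ico k (k + nl l)) = clades r (k + nl l) := by
  rw [iparts_node, Multiset.filter_add,
    Multiset.filter_eq_nil.mpr fun _ hA h => h (subset_of_mem_clades hA),
    Multiset.filter_eq_self.mpr fun _ => not_subset_of_mem_clades, zero_add]

lemma subset_of_mem_iparts_node {l r : BT} {k : ℕ} {A : Finset ℕ}
    (hA : A ∈ iparts (node l r) k) (hk : k ∈ A) : A ⊆ Finset.Ico k (k + nl l) := by
  rw [iparts_node, Multiset.mem_add] at hA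
  rcases hA with hA | hA
  · exact subset_of_mem_clades hA
  · have := Finset.mem_Ico.mp (subset_of_mem_clades hA hk)
    have := nl_pos l
    omega

lemma nl_le_of_iparts_node_eq {l r l' r' : BT} {k : ℕ}
    (h : iparts (node l r) k = iparts (node l' r') k) : nl l ≤ nl l' := by
  cases l with
  | leaf => exact nl_pos l'
  | node a b =>
    have hlt : k < k + nl (node a b) := Nat.lt_add_of_pos_right (nl_pos _)
    have hmem : Finset.Ico k (k + nl (node a b)) ∈ iparts (node l' r') k := by
      rw [← h, iparts_node]
      exact Multiset.mem_add.mpr (Or.inl (Multiset.mem_cons_self _ _))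
    have hsub := subset_of_mem_iparts_node hmem (Finset.mem_Ico.mpr ⟨le_rfl, hlt⟩)
    have := ((Finset.Ico_subset_Ico_iff hlt).mp hsub).2
    omega

lemma iparts_eq_of_clades_eq {s t : BT} {k : ℕ} (hsize : s.size = t.size)
    (h : clades s k = clades t k) : iparts s k = iparts t k := by
  rw [clades, clades, isNode_eq_of_size_eq hsize, nl, nl, hsize] at h
  exact add_left_cancel h

theorem eq_of_iparts_eq {s t : BT} {k : ℕ} (hsize : s.size = t.size)
    (h : iparts s k = iparts t k) : s = t := by
  induction s generalizing t k with
  | leaf => cases t <;> simp_all [size]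
  | node l r ihl ihr =>
    cases t with
    | leaf => simp [size] at hsize
    | node l' r' =>
      have hnl : nl l = nl l' :=
        le_antisymm (nl_le_of_iparts_node_eq h) (nl_le_of_iparts_node_eq h.symm)
      have hsizel : l.size = l'.size := by simpa only [nl, Nat.add_right_cancel_iff] using hnl
      have hsizer : r.size = r'.size := by simp only [size] at hsize; omega
      have hl : clades l k = clades l' k := by
        rw [← filter_subset_iparts_node, ← filter_subset_iparts_node, h, hnl]
      have hr : clades r (k + nl l) = clades r' (k + nl l) := by
        rw [← filter_not_subset_iparts_node, h, hnl, filter_not_subset_iparts_node]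
      rw [ihl hsizel (iparts_eq_of_clades_eq hsizel hl),
        ihr hsizer (iparts_eq_of_clades_eq hsizer hr)]

theorem eq_iff_same_partitions (n : ℕ) (S T : BT)
    (hS : S.size = n) (hT : T.size = n) :
    (S = T ↔ iparts S 0 = iparts T 0) ∧ (S = T ↔ commonEdges S T = n - 1) := by
  have hparts : S = T ↔ iparts S 0 = iparts T 0 :=
    ⟨by rintro rfl; rfl, eq_of_iparts_eq (hS.trans hT.symm)⟩
  refine ⟨hparts, hparts.trans ?_⟩
  rw [commonEdges, Multiset.card_inter_eq_iff (by rw [card_iparts, hS]) (by rw [card_iparts, hT])]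

end BT
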